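/- arXiv:math/0211066 — 4 statements merged into one kernel-verified Lean document; each statement's English description precedes it below -/
import Mathlib

section
/- Suppose σ_0(y) ≤ ζ_0(y) ≤ σ_0(y) + 1 for all y ∈ ℝ^d, and let A_0 = { y : σ_0(y) ∈ ℤ and ζ_0(y) = σ_0(y) + 1 } and A_T = { x : σ_T(x) ∈ ℤ and ζ_T(x) = σ_T(x) + 1 }. Then the complement satisfies A_T^c = { x : ζ_T(x) has a maximizer y with y ∈ A_0^c }. (Lemma 9.1(c), stated pathwise.) -/
/-!
Since the last-passage map `σ₀ ↦ σ_T` is monotone and commutes with adding a constant,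
`σ₀ ≤ ζ₀ ≤ σ₀ + 1` propagates to `σ_T ≤ ζ_T ≤ σ_T + 1`; so outside the defect sets the two
processes simply agree, and both sides of the claim say `ζ_T(x) = σ_T(x)`, resp. `ζ₀(y) = σ₀(y)`.
If `ζ_T(x) = σ_T(x)`, any maximizer `z` of `σ_T(x)` gives
`ζ₀(z) + T(z,x) ≤ ζ_T(x) = σ₀(z) + T(z,x) ≤ ζ₀(z) + T(z,x)`, so `z` maximizes `ζ_T(x)` and
`ζ₀(z) = σ₀(z)`. Conversely a maximizer `y` of `ζ_T(x)` with `ζ₀(y) = σ₀(y)` gives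
`ζ_T(x) = σ₀(y) + T(y,x) ≤ σ_T(x) ≤ ζ_T(x)`.
-/

open Set

noncomputable section

/-- `y` is a maximizer for `σT(x) = sup_{y ≤ x} (σ0(y) + T(y,x))`. -/
def IsMaximizer {d : ℕ} (σ0 σT : (Fin d → ℝ) → WithBot ℤ)
    (T : (Fin d → ℝ) → (Fin d → ℝ) → ℕ) (x y : Fin d → ℝ) : Prop :=
  y ≤ x ∧ σT x = σ0 y + (T y x : WithBot ℤ)

/-- `σT` is the (finite-valued) supremum `σT(x) = sup_{y ≤ x} (σ0(y) + T(y,x))`,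
and a maximizer exists whenever `σT(x) > −∞`. -/
def IsSupProcess {d : ℕ} (σ0 σT : (Fin d → ℝ) → WithBot ℤ)
    (T : (Fin d → ℝ) → (Fin d → ℝ) → ℕ) : Prop :=
  (∀ x y : Fin d → ℝ, y ≤ x → σ0 y + (T y x : WithBot ℤ) ≤ σT x) ∧
  (∀ (x : Fin d → ℝ) (b : WithBot ℤ),
      (∀ y : Fin d → ℝ, y ≤ x → σ0 y + (T y x : WithBot ℤ) ≤ b) → σT x ≤ b) ∧
  (∀ x : Fin d → ℝ, σT x ≠ ⊥ → ∃ y : Fin d → ℝ, IsMaximizer σ0 σT T x y)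

theorem WithBot.eq_iff_not_eq_add_one_of_le_of_le_add_one {a b : WithBot ℤ}
    (hab : a ≤ b) (hba : b ≤ a + 1) : b = a ↔ ¬ (a ≠ ⊥ ∧ b = a + 1) := by
  induction a using WithBot.recBotCoe with
  | bot =>
    rw [WithBot.bot_add, le_bot_iff] at hba
    simp [hba]
  | coe m =>
    lift b to ℤ using ne_bot_of_le_ne_bot WithBot.coe_ne_bot hab
    norm_cast at hab hba ⊢
    simp only [WithBot.coe_ne_bot, not_false_eq_true, true_and]
    omega

namespace IsSupProcess

variable {d : ℕ} {T : (Fin d → ℝ) → (Fin d → ℝ) → ℕ} {σ0 σT ζ0 ζT : (Fin d → ℝ) → WithBot ℤ}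

theorem exists_isMaximizer (hσ : IsSupProcess σ0 σT T) (x : Fin d → ℝ) :
    ∃ y, IsMaximizer σ0 σT T x y := by
  by_cases hx : σT x = ⊥
  · refine ⟨x, le_rfl, ?_⟩
    have hle := hσ.1 x x le_rfl
    rw [hx, le_bot_iff] at hle
    rw [hx, hle]
  · exact hσ.2.2 x hx

theorem le_add_of_le_add (hσ : IsSupProcess σ0 σT T) (hζ : IsSupProcess ζ0 ζT T)
    (c : WithBot ℤ) (h : ∀ y, ζ0 y ≤ σ0 y + c) (x : Fin d → ℝ) : ζT x ≤ σT x + c :=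
  hζ.2.1 x _ fun y hy =>
    calc ζ0 y + (T y x : WithBot ℤ)
        ≤ σ0 y + c + (T y x : WithBot ℤ) := add_le_add_left (h y) _
      _ = σ0 y + (T y x : WithBot ℤ) + c := add_right_comm _ _ _
      _ ≤ σT x + c := add_le_add_left (hσ.1 x y hy) _

theorem mono (hσ : IsSupProcess σ0 σT T) (hζ : IsSupProcess ζ0 ζT T)
    (h : ∀ y, σ0 y ≤ ζ0 y) (x : Fin d → ℝ) : σT x ≤ ζT x := by
  simpa using hζ.le_add_of_le_add hσ 0 (by simpa using h) x

theorem eq_iff_exists_isMaximizer_eq (hσ : IsSupProcess σ0 σT T) (hζ : IsSupProcess ζ0 ζT T)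
    (h : ∀ y, σ0 y ≤ ζ0 y) (x : Fin d → ℝ) :
    ζT x = σT x ↔ ∃ y, IsMaximizer ζ0 ζT T x y ∧ ζ0 y = σ0 y := by
  constructor
  · intro hx
    obtain ⟨z, hzx, hz⟩ := hσ.exists_isMaximizer x
    have hζz : ζ0 z + (T z x : WithBot ℤ) = σ0 z + (T z x : WithBot ℤ) :=
      le_antisymm (hz ▸ hx ▸ hζ.1 x z hzx) (add_le_add_left (h z) _)
    exact ⟨z, ⟨hzx, by rw [hx, hz, hζz]⟩,
      WithBot.add_right_cancel (WithBot.natCast_ne_bot _) hζz⟩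
  · rintro ⟨y, ⟨hyx, hy⟩, hyeq⟩
    refine le_antisymm ?_ (hσ.mono hζ h x)
    rw [hy, hyeq]
    exact hσ.1 x y hyx

end IsSupProcess

theorem coupling_defect_complement_general
    (d : ℕ)
    (T : (Fin d → ℝ) → (Fin d → ℝ) → ℕ)
    (σ0 σT ζ0 ζT : (Fin d → ℝ) → WithBot ℤ)
    (hσ : IsSupProcess σ0 σT T) (hζ : IsSupProcess ζ0 ζT T)
    (hcoup : ∀ y : Fin d → ℝ, σ0 y ≤ ζ0 y ∧ ζ0 y ≤ σ0 y + (1 : WithBot ℤ)) :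
    ∀ x : Fin d → ℝ,
      (¬ (σT x ≠ ⊥ ∧ ζT x = σT x + (1 : WithBot ℤ))) ↔
      ∃ y : Fin d → ℝ, IsMaximizer ζ0 ζT T x y ∧
        ¬ (σ0 y ≠ ⊥ ∧ ζ0 y = σ0 y + (1 : WithBot ℤ)) := by
  intro x
  have hle : ∀ y, σ0 y ≤ ζ0 y := fun y => (hcoup y).1
  rw [← WithBot.eq_iff_not_eq_add_one_of_le_of_le_add_one (hσ.mono hζ hle x)
    (hσ.le_add_of_le_add hζ 1 (fun y => (hcoup y).2) x)]
  simp only [← WithBot.eq_iff_not_eq_add_one_of_le_of_le_add_one (hcoup _).1 (hcoup _).2]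
  exact hσ.eq_iff_exists_isMaximizer_eq hζ hle x

/-- Lemma 9.1(c), pathwise. If `σ0 ≤ ζ0 ≤ σ0 + 1`, with
`A_0 = {y : σ0(y) ∈ ℤ, ζ0(y) = σ0(y) + 1}` and `A_T = {x : σT(x) ∈ ℤ, ζT(x) = σT(x) + 1}`,
then the complement of `A_T` is the set of `x` such that `ζT(x)` has a maximizer
`y ∉ A_0`. -/
theorem coupling_defect_complement
    (d : ℕ) (hd : 1 ≤ d)
    (T : (Fin d → ℝ) → (Fin d → ℝ) → ℕ) (hT : ∀ x, T x x = 0)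
    (σ0 σT ζ0 ζT : (Fin d → ℝ) → WithBot ℤ)
    (hσ : IsSupProcess σ0 σT T) (hζ : IsSupProcess ζ0 ζT T)
    (hcoup : ∀ y : Fin d → ℝ, σ0 y ≤ ζ0 y ∧ ζ0 y ≤ σ0 y + (1 : WithBot ℤ)) :
    ∀ x : Fin d → ℝ,
      (¬ (σT x ≠ ⊥ ∧ ζT x = σT x + (1 : WithBot ℤ))) ↔
      ∃ y : Fin d → ℝ, IsMaximizer ζ0 ζT T x y ∧
        ¬ (σ0 y ≠ ⊥ ∧ ζ0 y = σ0 y + (1 : WithBot ℤ)) :=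
  coupling_defect_complement_general d T σ0 σT ζ0 ζT hσ hζ hcoup

end
end

section
/- For every x ∈ ℝ^d and every t > 0, the set I(x,t) of Hopf-Lax maximizers is a nonempty compact subset of ℝ^d, and every y ∈ I(x,t) satisfies y < x, i.e. y_i < x_i for every coordinate i. -/
open Set Metric

noncomputable section

/-- `g(z) = c·(z₁⋯z_d)^{1/(d+1)}` (used only for `z ≥ 0`, where the product is `≥ 0`). -/
def gfun (c : ℝ) (d : ℕ) (z : Fin d → ℝ) : ℝ := c * (∏ i, z i) ^ (((d : ℝ) + 1)⁻¹)

/-- The set of values over which the Hopf-Lax supremum is taken. -/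
def hlSet (c : ℝ) (d : ℕ) (u0 : (Fin d → ℝ) → ℝ) (x : Fin d → ℝ) (t : ℝ) : Set ℝ :=
  (fun y => u0 y + t * gfun c d (t⁻¹ • (x - y))) '' {y | y ≤ x}

/-- The Hopf-Lax function `u(x,t)`, with `u(x,0) = u₀(x)`. -/
def hlu (c : ℝ) (d : ℕ) (u0 : (Fin d → ℝ) → ℝ) (x : Fin d → ℝ) (t : ℝ) : ℝ :=
  if t = 0 then u0 x else sSup (hlSet c d u0 x t)

/-- The set `I(x,t)` of maximizers in the Hopf-Lax formula. -/
def hlI (c : ℝ) (d : ℕ) (u0 : (Fin d → ℝ) → ℝ) (x : Fin d → ℝ) (t : ℝ) :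
    Set (Fin d → ℝ) :=
  {y | y ≤ x ∧ hlu c d u0 x t = u0 y + t * gfun c d (t⁻¹ • (x - y))}

/-- The decay condition at `−∞`:
for every `b`, `lim_{M→∞} sup { |y|_∞^{-d/(d+1)} u₀(y) : y ≤ b, |y|_∞ ≥ M } = −∞`. -/
def DecayCond (d : ℕ) (u0 : (Fin d → ℝ) → ℝ) : Prop :=
  ∀ b : Fin d → ℝ, ∀ C : ℝ, ∃ M : ℝ, 0 < M ∧ ∀ y : Fin d → ℝ, y ≤ b → M ≤ ‖y‖ →
    u0 y ≤ -C * ‖y‖ ^ ((d : ℝ) / ((d : ℝ) + 1))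

/-!
The objective `y ↦ u₀ y + t g((x - y)/t)` is continuous on the closed orthant `y ≤ x` and tends
to `-∞` at infinity there: `g((x - y)/t)` grows like `‖y‖^(d/(d+1))`, while the decay condition
makes `u₀` fall faster. Hence the supremum is attained and the maximizers form a closed bounded
set. A maximizer cannot lie on a face `yᵢ = xᵢ`: there `g` vanishes, and moving to
`y - ε(1, …, 1)` gains `t c (ε/t)^(d/(d+1))` in `g` while losing at most `L ε` in `u₀`, a net
gain for small `ε` because `d/(d+1) < 1`.
-/

open Filter Topology

theorem IsClosed.exists_isGreatest_image_isCompact_preimage {E α : Type*} [TopologicalSpace E]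
    [LinearOrder α] [TopologicalSpace α] [OrderClosedTopology α] [NoMinOrder α]
    {f : E → α} {s : Set E} (hs : IsClosed s) (hne : s.Nonempty) (hf : ContinuousOn f s)
    (hlim : Tendsto f (cocompact E ⊓ 𝓟 s) atBot) :
    ∃ m, IsGreatest (f '' s) m ∧ IsCompact (s ∩ f ⁻¹' {m}) := by
  obtain ⟨x₀, hx₀⟩ := hne
  have hbelow : ∀ᶠ y in cocompact E ⊓ 𝓟 s, f y < f x₀ := hlim.eventually_lt_atBot (f x₀)
  obtain ⟨y₀, hy₀, hmax⟩ := hf.exists_isMaxOn' hs hx₀ (hbelow.mono fun _ h => h.le)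
  obtain ⟨K, hK, hKc⟩ := mem_cocompact.1 (mem_inf_principal.1 hbelow)
  refine ⟨f y₀, ⟨mem_image_of_mem f hy₀, forall_mem_image.2 hmax⟩,
    hK.of_isClosed_subset (hf.preimage_isClosed_of_isClosed hs isClosed_singleton) ?_⟩
  rintro y ⟨hys, hy⟩
  by_contra hyK
  exact ((hKc hyK hys).trans_le (hmax hx₀)).ne hy

theorem eventually_mul_lt_mul_rpow {p : ℝ} (hp : p < 1) (L : ℝ) {a : ℝ} (ha : 0 < a) :
    ∀ᶠ ε in 𝓝[>] (0 : ℝ), L * ε < a * ε ^ p := by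
  have hlim : Tendsto (fun ε : ℝ => L * ε ^ (1 - p)) (𝓝 0) (𝓝 0) := by
    have h := ((Real.continuousAt_rpow_const 0 (1 - p) (Or.inr (sub_pos.2 hp).le)).const_mul
      L).tendsto
    rwa [Real.zero_rpow (sub_pos.2 hp).ne', mul_zero] at h
  filter_upwards [nhdsWithin_le_nhds (hlim.eventually_lt_const ha), self_mem_nhdsWithin]
    with ε hε (hε0 : 0 < ε)
  calc L * ε = L * ε ^ (1 - p) * ε ^ p := by
        rw [mul_assoc, ← Real.rpow_add hε0, sub_add_cancel, Real.rpow_one]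
    _ < a * ε ^ p := mul_lt_mul_of_pos_right hε (Real.rpow_pos_of_pos hε0 p)

theorem gfun_continuous (c : ℝ) (d : ℕ) : Continuous (gfun c d) :=
  continuous_const.mul <| (continuous_finsetProd _ fun i _ => continuous_apply i).rpow_const
    fun _ => Or.inr (by positivity)

section gfun

variable {c : ℝ} {d : ℕ}

theorem gfun_le_gfun (hc : 0 ≤ c) {z w : Fin d → ℝ} (hz : 0 ≤ z) (hzw : z ≤ w) :
    gfun c d z ≤ gfun c d w :=
  mul_le_mul_of_nonneg_left (Real.rpow_le_rpow (Finset.prod_nonneg fun i _ => hz i)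
    (Finset.prod_le_prod (fun i _ => hz i) fun i _ => hzw i) (by positivity)) hc

theorem gfun_const {a : ℝ} (ha : 0 ≤ a) :
    gfun c d (fun _ => a) = c * a ^ ((d : ℝ) / ((d : ℝ) + 1)) := by
  rw [gfun, Finset.prod_const, Finset.card_univ, Fintype.card_fin, ← Real.rpow_natCast,
    ← Real.rpow_mul ha, div_eq_mul_inv]

theorem gfun_eq_zero {z : Fin d → ℝ} {i : Fin d} (hi : z i = 0) : gfun c d z = 0 := by
  rw [gfun, Finset.prod_eq_zero (Finset.mem_univ i) hi, Real.zero_rpow (by positivity),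
    mul_zero]

end gfun

def hlObjective (c : ℝ) (d : ℕ) (u0 : (Fin d → ℝ) → ℝ) (x : Fin d → ℝ) (t : ℝ)
    (y : Fin d → ℝ) : ℝ :=
  u0 y + t * gfun c d (t⁻¹ • (x - y))

section hlObjective

variable {c t : ℝ} {d : ℕ} {u0 : (Fin d → ℝ) → ℝ} {x y : Fin d → ℝ}

theorem LocallyLipschitz.continuous_hlObjective (hlip : LocallyLipschitz u0) :
    Continuous (hlObjective c d u0 x t) :=
  hlip.continuous.add (continuous_const.mul ((gfun_continuous c d).comp (by fun_prop)))

theorem inv_smul_sub_nonneg (ht : 0 < t) (hy : y ≤ x) : 0 ≤ t⁻¹ • (x - y) :=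
  smul_nonneg (inv_nonneg.2 ht.le) (sub_nonneg.2 hy)

theorem hlObjective_le (hc : 0 ≤ c) (ht : 0 < t) (hy : y ≤ x) (hxy : ‖x‖ ≤ ‖y‖) :
    hlObjective c d u0 x t y ≤
      u0 y + t * c * (2 / t) ^ ((d : ℝ) / ((d : ℝ) + 1)) * ‖y‖ ^ ((d : ℝ) / ((d : ℝ) + 1)) := by
  have hle : t⁻¹ • (x - y) ≤ fun _ => 2 / t * ‖y‖ := fun i => by
    have hxi := (le_abs_self (x i)).trans (norm_le_pi_norm x i)
    have hyi := (neg_le_abs (y i)).trans (norm_le_pi_norm y i)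
    simp only [Pi.smul_apply, Pi.sub_apply, smul_eq_mul, div_mul_eq_mul_div, inv_mul_eq_div]
    gcongr
    linarith
  calc hlObjective c d u0 x t y ≤ u0 y + t * gfun c d (fun _ => 2 / t * ‖y‖) := by
        unfold hlObjective
        gcongr
        exact gfun_le_gfun hc (inv_smul_sub_nonneg ht hy) hle
    _ = _ := by
        rw [gfun_const (by positivity), Real.mul_rpow (by positivity) (norm_nonneg _)]
        ring

theorem le_hlObjective_sub_const (hc : 0 ≤ c) (ht : 0 < t) (hy : y ≤ x) {ε : ℝ} (hε : 0 ≤ ε) :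
    u0 (y - fun _ => ε) + t * c * (ε / t) ^ ((d : ℝ) / ((d : ℝ) + 1)) ≤
      hlObjective c d u0 x t (y - fun _ => ε) := by
  have hle : (fun _ => ε / t) ≤ t⁻¹ • (x - (y - fun _ => ε)) := fun i => by
    simp only [Pi.smul_apply, Pi.sub_apply, smul_eq_mul, inv_mul_eq_div]
    gcongr
    linarith [hy i]
  have hg := gfun_le_gfun hc (fun _ => by positivity) hle
  rw [gfun_const (by positivity)] at hg
  unfold hlObjective
  nlinarith

theorem tendsto_hlObjective_atBot (hc : 0 ≤ c) (ht : 0 < t) (hdecay : DecayCond d u0) :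
    Tendsto (hlObjective c d u0 x t) (cocompact _ ⊓ 𝓟 (Iic x)) atBot := by
  set p : ℝ := (d : ℝ) / ((d : ℝ) + 1)
  set C₀ : ℝ := t * c * (2 / t) ^ p
  rw [tendsto_atBot]
  intro b
  obtain ⟨M, -, hM⟩ := hdecay x (C₀ + |b|)
  have hlarge : ∀ᶠ y in cocompact (Fin d → ℝ), max (max M ‖x‖) 1 ≤ ‖y‖ :=
    tendsto_norm_cocompact_atTop.eventually_ge_atTop _
  filter_upwards [hlarge.filter_mono inf_le_left, mem_inf_of_right (mem_principal_self _)]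
    with y hy (hyx : y ≤ x)
  simp only [max_le_iff] at hy
  have h1 : 1 ≤ ‖y‖ ^ p := Real.one_le_rpow hy.2 (by positivity)
  calc hlObjective c d u0 x t y ≤ u0 y + C₀ * ‖y‖ ^ p := hlObjective_le hc ht hyx hy.1.2
    _ ≤ -(C₀ + |b|) * ‖y‖ ^ p + C₀ * ‖y‖ ^ p := by gcongr; exact hM y hyx hy.1.1
    _ = -|b| * ‖y‖ ^ p := by ring
    _ ≤ -|b| := by nlinarith [abs_nonneg b]
    _ ≤ b := neg_abs_le b

theorem exists_hlObjective_gt (hc : 0 < c) (ht : 0 < t) (hlip : LocallyLipschitz u0)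
    (hy : y ≤ x) {i : Fin d} (hi : y i = x i) :
    ∃ y' ≤ x, hlObjective c d u0 x t y < hlObjective c d u0 x t y' := by
  set p : ℝ := (d : ℝ) / ((d : ℝ) + 1)
  have hp : p < 1 := by rw [div_lt_one (by positivity)]; linarith
  obtain ⟨L, s, hs, hL⟩ := hlip y
  have hnear : ∀ᶠ ε in 𝓝[>] (0 : ℝ), (y - fun _ => ε) ∈ s :=
    nhdsWithin_le_nhds ((Continuous.tendsto' (f := fun ε : ℝ => y - fun _ => ε) (by fun_prop) 0 y
      (sub_eq_self.2 rfl)) hs)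
  obtain ⟨ε, hεs, hεL, hε : 0 < ε⟩ := (hnear.and ((eventually_mul_lt_mul_rpow hp L
    (a := t * c / t ^ p) (by positivity)).and self_mem_nhdsWithin)).exists
  refine ⟨y - fun _ => ε, fun j => (sub_le_self _ hε.le).trans (hy j), ?_⟩
  have hlip_bound : u0 y - L * ε ≤ u0 (y - fun _ => ε) := by
    have hdist : dist y (y - fun _ => ε) ≤ ε := by
      simpa [dist_eq_norm, abs_of_pos hε] using pi_norm_const_le (ι := Fin d) ε
    have := (le_abs_self _).trans ((hL.dist_le_mul y (mem_of_mem_nhds hs) _ hεs).trans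
      (mul_le_mul_of_nonneg_left hdist L.2))
    linarith
  calc hlObjective c d u0 x t y = u0 y := by
        rw [hlObjective, gfun_eq_zero (i := i) (by simp [hi]), mul_zero, add_zero]
    _ < u0 y - L * ε + t * c * (ε / t) ^ p := by
        rw [Real.div_rpow hε.le ht.le]
        have : t * c / t ^ p * ε ^ p = t * c * (ε ^ p / t ^ p) := by ring
        linarith
    _ ≤ u0 (y - fun _ => ε) + t * c * (ε / t) ^ p := by gcongr
    _ ≤ hlObjective c d u0 x t (y - fun _ => ε) := le_hlObjective_sub_const hc.le ht hy hε.le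

end hlObjective

theorem hlI_nonempty_compact_strict_general
    (d : ℕ) (c : ℝ) (hc : 0 < c)
    (u0 : (Fin d → ℝ) → ℝ) (hlip : LocallyLipschitz u0)
    (hdecay : DecayCond d u0)
    (x : Fin d → ℝ) (t : ℝ) (ht : 0 < t) :
    (hlI c d u0 x t).Nonempty ∧ IsCompact (hlI c d u0 x t) ∧
      ∀ y ∈ hlI c d u0 x t, ∀ i : Fin d, y i < x i := by
  obtain ⟨m, hmax, hcompact⟩ := isClosed_Iic.exists_isGreatest_image_isCompact_preimage
    nonempty_Iic hlip.continuous_hlObjective.continuousOn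
    (tendsto_hlObjective_atBot hc.le ht hdecay)
  have hlu_eq : hlu c d u0 x t = m := by
    rw [hlu, if_neg ht.ne']
    exact hmax.csSup_eq
  have hlI_eq : hlI c d u0 x t = Iic x ∩ hlObjective c d u0 x t ⁻¹' {m} := by
    ext y
    simp only [hlI, hlu_eq, hlObjective, mem_ofPred_eq, mem_inter_iff, mem_Iic, mem_preimage,
      mem_singleton_iff, eq_comm]
  rw [hlI_eq]
  refine ⟨?_, hcompact, ?_⟩
  · exact hmax.1
  · rintro y ⟨hyx, hym⟩ i
    refine (hyx i).lt_of_ne fun hi => ?_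
    obtain ⟨y', hy'x, hlt⟩ := exists_hlObjective_gt hc ht hlip hyx hi
    exact (hmax.2 ⟨y', hy'x, rfl⟩).not_gt (hym ▸ hlt)

/-- For every `x ∈ ℝ^d` and `t > 0`, the set `I(x,t)` of Hopf-Lax maximizers is a
nonempty compact set, and every maximizer `y ∈ I(x,t)` satisfies `y < x` strictly in
every coordinate. -/
theorem hlI_nonempty_compact_strict
    (d : ℕ) (hd : 1 ≤ d) (c : ℝ) (hc : 0 < c)
    (u0 : (Fin d → ℝ) → ℝ) (hmono : Monotone u0) (hlip : LocallyLipschitz u0)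
    (hdecay : DecayCond d u0)
    (x : Fin d → ℝ) (t : ℝ) (ht : 0 < t) :
    (hlI c d u0 x t).Nonempty ∧ IsCompact (hlI c d u0 x t) ∧
      ∀ y ∈ hlI c d u0 x t, ∀ i : Fin d, y i < x i :=
  hlI_nonempty_compact_strict_general d c hc u0 hlip hdecay x t ht

end
end

section
/- The Hopf-Lax function u has the following regularity: u(x,t) is finite for all (x,t) ∈ ℝ^d × [0,∞); u is nondecreasing in x (if x ≤ x' then u(x,t) ≤ u(x',t)); for each fixed x, the map t ↦ u(x,t) is strictly increasing on (0,∞); u is locally Lipschitz on ℝ^d × (0,∞); and u is continuous on ℝ^d × [0,∞), in particular u(x,t) → u_0(x) as t ↓ 0. -/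
open Set Metric Filter

noncomputable section

/-!
For `t > 0` and `y ≤ x` the Hopf-Lax competitor is `u₀(y) + c·(t·∏ᵢ (xᵢ - yᵢ))^{1/(d+1)}`, whose
gain over `u₀(y)` grows only like `|y|^{d/(d+1)}` as `y → -∞`. By the decay condition, every
competitor with `|y|` large therefore loses to `y = x`, locally uniformly in `(x, t)`. This makes
`u` finite with `u(x,t) ≤ u₀(x) + O(t^{1/(d+1)})`, hence continuous at `t = 0`; on the remaining
bounded set of `y`, moving `y` together with `x` and using the Lipschitz bound of `u₀` there
gives the Lipschitz bound in `x`.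

In `t` the gain of a competitor scales exactly by `(t/s)^{1/(d+1)}`. For bounded competitors this
gives the Lipschitz bound in `t`, and for all of them
`u(x,s) - u₀(x) ≤ (s/t)^{1/(d+1)}·(u(x,t) - u₀(x))`. Strict monotonicity in `t` follows, since
`u(x,t) > u₀(x)`: replacing `y = x` by `x - r·𝟙` costs `O(r)` in `u₀` and gains a multiple of
`r^{d/(d+1)}`.
-/

open Topology
open scoped NNReal

theorem LipschitzOnWith.uncurry {α β γ : Type*} [PseudoEMetricSpace α] [PseudoEMetricSpace β]
    [PseudoEMetricSpace γ] {f : α → β → γ} {s : Set α} {t : Set β} {Kα Kβ : ℝ≥0}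
    (hα : ∀ b ∈ t, LipschitzOnWith Kα (fun a => f a b) s)
    (hβ : ∀ a ∈ s, LipschitzOnWith Kβ (f a) t) :
    LipschitzOnWith (Kα + Kβ) (Function.uncurry f) (s ×ˢ t) := by
  rintro ⟨a₁, b₁⟩ ⟨ha₁, hb₁⟩ ⟨a₂, b₂⟩ ⟨ha₂, hb₂⟩
  simp only [Function.uncurry, ENNReal.coe_add, add_mul]
  refine (edist_triangle _ (f a₂ b₁) _).trans (add_le_add ?_ ?_)
  · exact (hα b₁ hb₁ ha₁ ha₂).trans (mul_right_mono (le_max_left _ _))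
  · exact (hβ a₂ ha₂ hb₁ hb₂).trans (mul_right_mono (le_max_right _ _))

theorem prod_sub_nonneg {ι : Type*} [Fintype ι] {x y : ι → ℝ} (hyx : y ≤ x) :
    0 ≤ ∏ i, (x i - y i) :=
  Finset.prod_nonneg fun i _ => sub_nonneg.2 (hyx i)

theorem prod_sub_le_pow_of_norm_sub_le {ι : Type*} [Fintype ι] {x y : ι → ℝ} {B : ℝ}
    (hyx : y ≤ x) (hB : ‖x - y‖ ≤ B) : ∏ i, (x i - y i) ≤ B ^ Fintype.card ι := by
  calc ∏ i, (x i - y i) ≤ ∏ _i : ι, B :=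
        Finset.prod_le_prod (fun i _ => sub_nonneg.2 (hyx i))
          fun i _ => (Real.le_norm_self _).trans ((norm_le_pi_norm (x - y) i).trans hB)
    _ = B ^ Fintype.card ι := by simp

theorem Monotone.apply_neg_const_le_of_norm_le {ι β : Type*} [Fintype ι] [Preorder β]
    {f : (ι → ℝ) → β} (hf : Monotone f) {x : ι → ℝ} {ρ : ℝ} (hx : ‖x‖ ≤ ρ) :
    f (fun _ => -ρ) ≤ f x :=
  hf fun i => neg_le_of_abs_le ((norm_le_pi_norm x i).trans hx)

/-- For `t > 0` and `y ≤ x`, this is the Hopf-Lax competitor `u₀(y) + t·g((x-y)/t)`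
(`hlSet_eq_image_hlTerm`); `g` being homogeneous of degree one, `t` enters only through
`t·∏ (xᵢ - yᵢ)`. -/
def hlTerm (c : ℝ) (d : ℕ) (u0 : (Fin d → ℝ) → ℝ) (x y : Fin d → ℝ) (t : ℝ) : ℝ :=
  u0 y + c * (t * ∏ i, (x i - y i)) ^ ((d : ℝ) + 1)⁻¹

section HopfLax

variable {c : ℝ} {d : ℕ} {u0 : (Fin d → ℝ) → ℝ}

theorem mul_gfun_inv_smul {t : ℝ} (ht : 0 < t) {z : Fin d → ℝ} (hz : 0 ≤ ∏ i, z i) :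
    t * gfun c d (t⁻¹ • z) = c * (t * ∏ i, z i) ^ ((d : ℝ) + 1)⁻¹ := by
  have hprod : ∏ i, (t⁻¹ • z) i = t⁻¹ ^ d * ∏ i, z i := by
    simp [Finset.prod_mul_distrib]
  have ht_eq : t = (t ^ (d + 1)) ^ ((d : ℝ) + 1)⁻¹ := by
    simpa using (Real.pow_rpow_inv_natCast ht.le d.succ_ne_zero).symm
  rw [gfun, hprod, mul_left_comm, ht_eq, ← Real.mul_rpow (by positivity) (by positivity),
    ← ht_eq, pow_succ, inv_pow]
  congr 2
  field_simp

theorem hlSet_eq_image_hlTerm (x : Fin d → ℝ) {t : ℝ} (ht : 0 < t) :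
    hlSet c d u0 x t = (fun y => hlTerm c d u0 x y t) '' {y | y ≤ x} :=
  Set.image_congr fun y hy => by
    rw [mul_gfun_inv_smul ht (by simpa using prod_sub_nonneg hy)]
    rfl

theorem hlu_zero (x : Fin d → ℝ) : hlu c d u0 x 0 = u0 x := if_pos rfl

theorem hlu_of_pos (x : Fin d → ℝ) {t : ℝ} (ht : 0 < t) :
    hlu c d u0 x t = sSup ((fun y => hlTerm c d u0 x y t) '' {y | y ≤ x}) := by
  rw [hlu, if_neg ht.ne', hlSet_eq_image_hlTerm x ht]

theorem hlTerm_sub_eq_of_sub_eq {x y x' y' : Fin d → ℝ} (h : x - y = x' - y') (t : ℝ) :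
    hlTerm c d u0 x y t - u0 y = hlTerm c d u0 x' y' t - u0 y' := by
  simp only [hlTerm, add_sub_cancel_left]
  simp only [← Pi.sub_apply, h]

theorem hlTerm_sub_eq_rpow_mul {x y : Fin d → ℝ} (hyx : y ≤ x) {s t : ℝ} (hs : 0 < s)
    (ht : 0 ≤ t) :
    hlTerm c d u0 x y t - u0 y = (t / s) ^ ((d : ℝ) + 1)⁻¹ * (hlTerm c d u0 x y s - u0 y) := by
  have hP := prod_sub_nonneg hyx
  simp only [hlTerm, add_sub_cancel_left]
  rw [show t * ∏ i, (x i - y i) = t / s * (s * ∏ i, (x i - y i)) by field_simp,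
    Real.mul_rpow (by positivity) (by positivity)]
  ring

theorem exists_forall_hlTerm_le_of_le_norm (hc : 0 ≤ c) (hdecay : DecayCond d u0) (ρ T m : ℝ) :
    ∃ R > 0, ∀ x y : Fin d → ℝ, ‖x‖ ≤ ρ → y ≤ x → R ≤ ‖y‖ → ∀ t ∈ Icc 0 T,
      hlTerm c d u0 x y t ≤ m := by
  set α : ℝ := ((d : ℝ) + 1)⁻¹
  set C := c * (T * 2 ^ d) ^ α
  obtain ⟨M, -, hM⟩ := hdecay (fun _ => ρ) (C + |m|)
  refine ⟨max M (max ρ 1), by positivity, fun x y hx hyx hy t ht => ?_⟩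
  simp only [max_le_iff] at hy
  have hT : 0 ≤ T := ht.1.trans ht.2
  have hyρ : y ≤ fun _ => ρ := fun i =>
    (hyx i).trans ((Real.le_norm_self _).trans ((norm_le_pi_norm x i).trans hx))
  have hxy : ‖x - y‖ ≤ 2 * ‖y‖ := by linarith [norm_sub_le x y]
  have hgain : c * (t * ∏ i, (x i - y i)) ^ α ≤ C * ‖y‖ ^ ((d : ℝ) / ((d : ℝ) + 1)) := by
    have hP : t * ∏ i, (x i - y i) ≤ T * 2 ^ d * ‖y‖ ^ d := by
      have := prod_sub_le_pow_of_norm_sub_le hyx hxy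
      rw [Fintype.card_fin, mul_pow] at this
      rw [mul_assoc]
      exact mul_le_mul ht.2 this (prod_sub_nonneg hyx) hT
    calc c * (t * ∏ i, (x i - y i)) ^ α ≤ c * (T * 2 ^ d * ‖y‖ ^ d) ^ α := by
          gcongr
          exact mul_nonneg ht.1 (prod_sub_nonneg hyx)
      _ = C * ‖y‖ ^ ((d : ℝ) / ((d : ℝ) + 1)) := by
          rw [Real.mul_rpow (by positivity) (by positivity), ← Real.rpow_natCast ‖y‖ d,
            ← Real.rpow_mul (norm_nonneg _), div_eq_mul_inv, mul_assoc]
  have hy1 : 1 ≤ ‖y‖ ^ ((d : ℝ) / ((d : ℝ) + 1)) := Real.one_le_rpow hy.2.2 (by positivity)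
  have hu0 := hM y hyρ hy.1
  calc hlTerm c d u0 x y t ≤ -|m| * ‖y‖ ^ ((d : ℝ) / ((d : ℝ) + 1)) := by
        rw [hlTerm]; linarith
    _ ≤ -|m| := by nlinarith [abs_nonneg m]
    _ ≤ m := neg_abs_le m

theorem exists_forall_hlTerm_le_u0_add (hc : 0 ≤ c) (hmono : Monotone u0)
    (hdecay : DecayCond d u0) (ρ T : ℝ) :
    ∃ D, ∀ x y : Fin d → ℝ, ‖x‖ ≤ ρ → y ≤ x → ∀ t ∈ Icc 0 T,
      hlTerm c d u0 x y t ≤ u0 x + c * (t * D) ^ ((d : ℝ) + 1)⁻¹ := by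
  obtain ⟨R, hR₀, hR⟩ := exists_forall_hlTerm_le_of_le_norm hc hdecay ρ T (u0 fun _ => -ρ)
  refine ⟨(ρ + R) ^ d, fun x y hx hyx t ht => ?_⟩
  rcases le_or_gt R ‖y‖ with hy | hy
  · have := hR x y hx hyx hy t ht
    have := hmono.apply_neg_const_le_of_norm_le hx
    have : 0 ≤ c * (t * (ρ + R) ^ d) ^ ((d : ℝ) + 1)⁻¹ := by
      have : 0 ≤ ρ := (norm_nonneg x).trans hx
      have := ht.1
      positivity
    linarith
  · have hP : ∏ i, (x i - y i) ≤ (ρ + R) ^ d := by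
      simpa using prod_sub_le_pow_of_norm_sub_le hyx (by linarith [norm_sub_le x y])
    unfold hlTerm
    gcongr
    · exact hmono hyx
    · exact mul_nonneg ht.1 (prod_sub_nonneg hyx)
    · exact ht.1

theorem bddAbove_hlSet (hc : 0 ≤ c) (hmono : Monotone u0) (hdecay : DecayCond d u0)
    (x : Fin d → ℝ) {t : ℝ} (ht : 0 < t) : BddAbove (hlSet c d u0 x t) := by
  obtain ⟨D, hD⟩ := exists_forall_hlTerm_le_u0_add hc hmono hdecay ‖x‖ t
  rw [hlSet_eq_image_hlTerm x ht]
  exact ⟨_, forall_mem_image.2 fun y hyx => hD x y le_rfl hyx t ⟨ht.le, le_rfl⟩⟩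

theorem hlTerm_le_hlu (hc : 0 ≤ c) (hmono : Monotone u0) (hdecay : DecayCond d u0)
    {x y : Fin d → ℝ} (hyx : y ≤ x) {t : ℝ} (ht : 0 < t) :
    hlTerm c d u0 x y t ≤ hlu c d u0 x t := by
  have := bddAbove_hlSet hc hmono hdecay x ht
  rw [hlSet_eq_image_hlTerm x ht] at this
  rw [hlu_of_pos x ht]
  exact le_csSup this (mem_image_of_mem _ hyx)

theorem hlu_le_of_forall_hlTerm_le {x : Fin d → ℝ} {t v : ℝ} (ht : 0 < t)
    (h : ∀ y ≤ x, hlTerm c d u0 x y t ≤ v) : hlu c d u0 x t ≤ v := by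
  rw [hlu_of_pos x ht]
  exact csSup_le (Nonempty.image _ ⟨x, le_refl x⟩) (forall_mem_image.2 h)

theorem exists_forall_hlu_le_u0_add (hc : 0 ≤ c) (hmono : Monotone u0) (hdecay : DecayCond d u0)
    (ρ T : ℝ) :
    ∃ D, ∀ x : Fin d → ℝ, ‖x‖ ≤ ρ → ∀ t ∈ Icc 0 T,
      hlu c d u0 x t ≤ u0 x + c * (t * D) ^ ((d : ℝ) + 1)⁻¹ := by
  obtain ⟨D, hD⟩ := exists_forall_hlTerm_le_u0_add hc hmono hdecay ρ T
  refine ⟨D, fun x hx t ht => ?_⟩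
  rcases ht.1.eq_or_lt with rfl | ht₀
  · simp [hlu_zero, Real.zero_rpow (by positivity : ((d : ℝ) + 1)⁻¹ ≠ 0)]
  · exact hlu_le_of_forall_hlTerm_le ht₀ fun y hyx => hD x y hx hyx t ht

theorem u0_lt_hlu (hc : 0 < c) (hmono : Monotone u0) (hlip : LocallyLipschitz u0)
    (hdecay : DecayCond d u0) (x : Fin d → ℝ) {t : ℝ} (ht : 0 < t) :
    u0 x < hlu c d u0 x t := by
  set α : ℝ := ((d : ℝ) + 1)⁻¹
  have hα : 0 < α := by positivity
  obtain ⟨K, U, hU, hK⟩ := hlip x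
  obtain ⟨ρ, hρ, hρU⟩ := Metric.mem_nhds_iff.1 hU
  have hsmall : Tendsto (fun r : ℝ => (K : ℝ) * r ^ α) (𝓝[>] 0) (𝓝 0) := by
    have := ((Real.continuousAt_rpow_const 0 α (Or.inr hα.le)).const_mul (K : ℝ)).tendsto
    rw [Real.zero_rpow hα.ne', mul_zero] at this
    exact this.mono_left nhdsWithin_le_nhds
  have hnear : ∀ᶠ r in 𝓝[>] (0 : ℝ), r ∈ Ioo 0 ρ := Ioo_mem_nhdsGT hρ
  obtain ⟨r, ⟨hr, hrρ⟩, hrK⟩ :=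
    (hnear.and (hsmall.eventually_lt_const (by positivity : (0 : ℝ) < c * t ^ α))).exists
  set y : Fin d → ℝ := x - fun _ => r
  have hyx : y ≤ x := fun i => by simp [y, hr.le]
  have hdist : dist x y ≤ r := by
    simpa [y, dist_eq_norm, abs_of_pos hr] using pi_norm_const_le (ι := Fin d) r
  have hLip : u0 x ≤ u0 y + K * r := by
    have hxU := hρU (mem_ball_self hρ)
    have hyU := hρU (mem_ball'.2 (hdist.trans_lt hrρ))
    exact (hK.le_add_mul hxU hyU).trans (by gcongr)
  have hterm : hlTerm c d u0 x y t = u0 y + c * t ^ α * r ^ ((d : ℝ) * α) := by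
    simp only [hlTerm, y, Pi.sub_apply, sub_sub_cancel, Finset.prod_const, Finset.card_univ,
      Fintype.card_fin]
    rw [Real.mul_rpow ht.le (by positivity), ← Real.rpow_natCast, ← Real.rpow_mul hr.le, mul_assoc]
  have hr_split : r = r ^ ((d : ℝ) * α) * r ^ α := by
    rw [← Real.rpow_add hr, show (d : ℝ) * α + α = 1 by simp only [α]; field_simp, Real.rpow_one]
  have hgain : (K : ℝ) * r < c * t ^ α * r ^ ((d : ℝ) * α) := by
    calc (K : ℝ) * r = r ^ ((d : ℝ) * α) * (K * r ^ α) := by nth_rw 1 [hr_split]; ring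
      _ < r ^ ((d : ℝ) * α) * (c * t ^ α) := mul_lt_mul_of_pos_left hrK (by positivity)
      _ = c * t ^ α * r ^ ((d : ℝ) * α) := by ring
  calc u0 x < hlTerm c d u0 x y t := by linarith
    _ ≤ hlu c d u0 x t := hlTerm_le_hlu hc.le hmono hdecay hyx ht

theorem u0_le_hlu (hc : 0 < c) (hmono : Monotone u0) (hlip : LocallyLipschitz u0)
    (hdecay : DecayCond d u0) (x : Fin d → ℝ) {t : ℝ} (ht : 0 ≤ t) :
    u0 x ≤ hlu c d u0 x t := by
  rcases ht.eq_or_lt with rfl | ht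
  · rw [hlu_zero]
  · exact (u0_lt_hlu hc hmono hlip hdecay x ht).le

theorem hlu_le_u0_add_rpow_mul (hc : 0 ≤ c) (hmono : Monotone u0) (hdecay : DecayCond d u0)
    (x : Fin d → ℝ) {s t : ℝ} (hs : 0 < s) (hst : s ≤ t) :
    hlu c d u0 x s ≤ u0 x + (s / t) ^ ((d : ℝ) + 1)⁻¹ * (hlu c d u0 x t - u0 x) := by
  have ht : 0 < t := hs.trans_le hst
  set μ := (s / t) ^ ((d : ℝ) + 1)⁻¹
  have hμ₀ : 0 ≤ μ := by positivity
  have hμ₁ : μ ≤ 1 := Real.rpow_le_one (by positivity) ((div_le_one ht).2 hst) (by positivity)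
  refine hlu_le_of_forall_hlTerm_le hs fun y hyx => ?_
  have hscale := hlTerm_sub_eq_rpow_mul (c := c) (u0 := u0) hyx ht hs.le
  have h1 : (1 - μ) * u0 y ≤ (1 - μ) * u0 x :=
    mul_le_mul_of_nonneg_left (hmono hyx) (by linarith)
  have h2 : μ * hlTerm c d u0 x y t ≤ μ * hlu c d u0 x t := by
    gcongr
    exact hlTerm_le_hlu hc hmono hdecay hyx ht
  linarith

theorem strictMonoOn_hlu (hc : 0 < c) (hmono : Monotone u0) (hlip : LocallyLipschitz u0)
    (hdecay : DecayCond d u0) (x : Fin d → ℝ) : StrictMonoOn (hlu c d u0 x) (Ioi 0) := by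
  intro s (hs : 0 < s) t (ht : 0 < t) hst
  have hμ₀ : 0 ≤ (s / t) ^ ((d : ℝ) + 1)⁻¹ := by positivity
  have hμ : (s / t) ^ ((d : ℝ) + 1)⁻¹ < 1 :=
    Real.rpow_lt_one (by positivity) ((div_lt_one ht).2 hst) (by positivity)
  have := hlu_le_u0_add_rpow_mul hc.le hmono hdecay x hs hst.le
  have := u0_lt_hlu hc hmono hlip hdecay x hs
  nlinarith

theorem monotone_hlu (hc : 0 ≤ c) (hmono : Monotone u0) (hdecay : DecayCond d u0) {t : ℝ}
    (ht : 0 ≤ t) : Monotone fun x => hlu c d u0 x t := by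
  intro x x' hxx'
  rcases ht.eq_or_lt with rfl | ht
  · simpa only [hlu_zero] using hmono hxx'
  refine hlu_le_of_forall_hlTerm_le ht fun y hyx => ?_
  set y' := y + (x' - x)
  have hy'x' : y' ≤ x' := fun i => by
    have := hyx i; simp only [y', Pi.add_apply, Pi.sub_apply]; linarith
  have hshift := hlTerm_sub_eq_of_sub_eq (c := c) (u0 := u0)
    (show x - y = x' - y' by simp only [y']; abel) t
  have := hmono (show y ≤ y' from le_add_of_nonneg_right (sub_nonneg.2 hxx'))
  have := hlTerm_le_hlu hc hmono hdecay hy'x' ht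
  linarith

theorem exists_lipschitzOnWith_hlu_left (hc : 0 < c) (hmono : Monotone u0)
    (hlip : LocallyLipschitz u0) (hdecay : DecayCond d u0) (ρ T : ℝ) :
    ∃ K, ∀ t ∈ Ioc 0 T, LipschitzOnWith K (fun x => hlu c d u0 x t) (closedBall 0 ρ) := by
  obtain ⟨R, -, hR⟩ := exists_forall_hlTerm_le_of_le_norm hc.le hdecay ρ T (u0 fun _ => -ρ)
  obtain ⟨K, hK⟩ := hlip.locallyLipschitzOn.exists_lipschitzOnWith_of_compact
    (isCompact_closedBall (0 : Fin d → ℝ) (R + 2 * ρ))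
  refine ⟨K, fun t ht => LipschitzOnWith.of_le_add_mul K fun x' hx' x hx => ?_⟩
  rw [mem_closedBall_zero_iff] at hx hx'
  have hKd : 0 ≤ K * dist x' x := by positivity
  refine hlu_le_of_forall_hlTerm_le ht.1 fun y hyx' => ?_
  rcases le_or_gt R ‖y‖ with hy | hy
  · have := hR x' y hx' hyx' hy t ⟨ht.1.le, ht.2⟩
    have := hmono.apply_neg_const_le_of_norm_le hx
    have := u0_le_hlu hc hmono hlip hdecay x ht.1.le
    linarith
  · set y' := y - (x' - x)
    have hy'x : y' ≤ x := fun i => by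
      have := hyx' i; simp only [y', Pi.sub_apply]; linarith
    have hshift := hlTerm_sub_eq_of_sub_eq (c := c) (u0 := u0)
      (show x' - y = x - y' by simp only [y']; abel) t
    have hyy' : dist y y' = dist x' x := by simp [y', dist_eq_norm]
    have hyB : y ∈ closedBall 0 (R + 2 * ρ) := by
      rw [mem_closedBall_zero_iff]; linarith [norm_nonneg x]
    have hy'B : y' ∈ closedBall 0 (R + 2 * ρ) := by
      rw [mem_closedBall_zero_iff]
      linarith [norm_sub_le y (x' - x), norm_sub_le x' x]
    have hLip := hK.le_add_mul hyB hy'B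
    rw [hyy'] at hLip
    have := hlTerm_le_hlu hc.le hmono hdecay hy'x ht.1
    linarith

theorem hlTerm_le_hlTerm_add_mul (hc : 0 ≤ c) {x y : Fin d → ℝ} (hyx : y ≤ x) {t t' : ℝ}
    (ht : 0 < t) (htt' : t ≤ t') :
    hlTerm c d u0 x y t' ≤ hlTerm c d u0 x y t + (t' / t - 1) * (hlTerm c d u0 x y t - u0 y) := by
  have hscale := hlTerm_sub_eq_rpow_mul (c := c) (u0 := u0) hyx ht (ht.trans_le htt').le
  have hμ : (t' / t) ^ ((d : ℝ) + 1)⁻¹ ≤ t' / t :=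
    Real.rpow_le_self_of_one_le ((one_le_div ht).2 htt') (inv_le_one_of_one_le₀ (by simp))
  have hgain : 0 ≤ hlTerm c d u0 x y t - u0 y := by
    have := prod_sub_nonneg hyx
    simp only [hlTerm, add_sub_cancel_left]
    positivity
  nlinarith [mul_le_mul_of_nonneg_right hμ hgain]

theorem exists_lipschitzOnWith_hlu_right (hc : 0 < c) (hmono : Monotone u0)
    (hlip : LocallyLipschitz u0) (hdecay : DecayCond d u0) (ρ : ℝ) {t₁ T : ℝ} (ht₁ : 0 < t₁) :
    ∃ K, ∀ x : Fin d → ℝ, ‖x‖ ≤ ρ → LipschitzOnWith K (hlu c d u0 x) (Icc t₁ T) := by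
  obtain ⟨R, hR₀, hR⟩ := exists_forall_hlTerm_le_of_le_norm hc.le hdecay ρ T (u0 fun _ => -ρ)
  set B := c * (T * (ρ + R) ^ d) ^ ((d : ℝ) + 1)⁻¹
  refine ⟨(B / t₁).toNNReal, fun x hx => LipschitzOnWith.of_le_add_mul' _ fun t' ht' t ht => ?_⟩
  have hρ : 0 ≤ ρ := (norm_nonneg x).trans hx
  have hB : 0 ≤ B := by
    have : 0 ≤ T := ht₁.le.trans (ht.1.trans ht.2)
    positivity
  have ht₀ : 0 < t := ht₁.trans_le ht.1
  have hK : 0 ≤ B / t₁ * dist t' t := by positivity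
  rcases le_total t' t with htt' | htt'
  · have := (strictMonoOn_hlu hc hmono hlip hdecay x).monotoneOn (ht₁.trans_le ht'.1) ht₀ htt'
    linarith
  refine hlu_le_of_forall_hlTerm_le (ht₀.trans_le htt') fun y hyx => ?_
  have hu := hlTerm_le_hlu hc.le hmono hdecay hyx ht₀
  rcases le_or_gt R ‖y‖ with hy | hy
  · have := hR x y hx hyx hy t' ⟨(ht₀.trans_le htt').le, ht'.2⟩
    have := hmono.apply_neg_const_le_of_norm_le hx
    have := u0_le_hlu hc hmono hlip hdecay x ht₀.le
    linarith
  · have hCB : hlTerm c d u0 x y t - u0 y ≤ B := by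
      have hP : ∏ i, (x i - y i) ≤ (ρ + R) ^ d := by
        simpa using prod_sub_le_pow_of_norm_sub_le hyx (by linarith [norm_sub_le x y])
      have hT : 0 ≤ T := ht₀.le.trans ht.2
      simp only [hlTerm, add_sub_cancel_left, B]
      exact mul_le_mul_of_nonneg_left (Real.rpow_le_rpow (mul_nonneg ht₀.le (prod_sub_nonneg hyx))
        (mul_le_mul ht.2 hP (prod_sub_nonneg hyx) hT) (by positivity)) hc.le
    have h1 : hlTerm c d u0 x y t' ≤ hlTerm c d u0 x y t + (t' / t - 1) * B :=
      (hlTerm_le_hlTerm_add_mul hc.le hyx ht₀ htt').trans (by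
        gcongr
        exact sub_nonneg.2 ((one_le_div ht₀).2 htt'))
    have h2 : (t' / t - 1) * B ≤ B / t₁ * dist t' t := by
      rw [Real.dist_eq, abs_of_nonneg (sub_nonneg.2 htt'), div_sub_one ht₀.ne']
      calc (t' - t) / t * B ≤ (t' - t) / t₁ * B := by gcongr; exact ht.1
        _ = B / t₁ * (t' - t) := by ring
    linarith

theorem exists_lipschitzOnWith_hlu (hc : 0 < c) (hmono : Monotone u0)
    (hlip : LocallyLipschitz u0) (hdecay : DecayCond d u0) {p : (Fin d → ℝ) × ℝ} (hp : 0 < p.2) :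
    ∃ ε > 0, ∃ L : ℝ≥0,
      LipschitzOnWith L (fun q : (Fin d → ℝ) × ℝ => hlu c d u0 q.1 q.2) (ball p ε) := by
  set ρ := ‖p.1‖ + p.2 / 2
  obtain ⟨K₁, hK₁⟩ := exists_lipschitzOnWith_hlu_left hc hmono hlip hdecay ρ (2 * p.2)
  obtain ⟨K₂, hK₂⟩ :=
    exists_lipschitzOnWith_hlu_right hc hmono hlip hdecay ρ (half_pos hp) (T := 2 * p.2)
  have hsub : ball p (p.2 / 2) ⊆ closedBall 0 ρ ×ˢ Icc (p.2 / 2) (2 * p.2) := by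
    intro q hq
    rw [mem_ball, Prod.dist_eq, max_lt_iff, dist_eq_norm, Real.dist_eq, abs_lt] at hq
    refine ⟨mem_closedBall_zero_iff.2 ?_, by constructor <;> linarith⟩
    show ‖q.1‖ ≤ ‖p.1‖ + p.2 / 2
    linarith [norm_le_norm_add_norm_sub' q.1 p.1]
  refine ⟨p.2 / 2, half_pos hp, K₁ + K₂, LipschitzOnWith.mono ?_ hsub⟩
  exact LipschitzOnWith.uncurry (fun t ht => hK₁ t ⟨by linarith [ht.1], ht.2⟩)
    fun x hx => hK₂ x (mem_closedBall_zero_iff.1 hx)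

theorem continuousWithinAt_hlu_zero (hc : 0 < c) (hmono : Monotone u0)
    (hlip : LocallyLipschitz u0) (hdecay : DecayCond d u0) (x₀ : Fin d → ℝ) :
    ContinuousWithinAt (fun q : (Fin d → ℝ) × ℝ => hlu c d u0 q.1 q.2) {q | 0 ≤ q.2} (x₀, 0) := by
  set α : ℝ := ((d : ℝ) + 1)⁻¹
  obtain ⟨D, hD⟩ := exists_forall_hlu_le_u0_add hc.le hmono hdecay (‖x₀‖ + 1) 1
  have hupper : Continuous fun q : (Fin d → ℝ) × ℝ => u0 q.1 + c * (q.2 * D) ^ α :=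
    (hlip.continuous.comp continuous_fst).add
      (continuous_const.mul ((continuous_snd.mul continuous_const).rpow_const
        fun _ => Or.inr (by positivity)))
  have hnear : ∀ᶠ q in 𝓝[{q | 0 ≤ q.2}] (x₀, (0 : ℝ)), ‖q.1‖ ≤ ‖x₀‖ + 1 ∧ q.2 ∈ Icc 0 1 := by
    filter_upwards [self_mem_nhdsWithin, mem_nhdsWithin_of_mem_nhds (ball_mem_nhds _ one_pos)]
      with q (hq₀ : 0 ≤ q.2) hq
    rw [mem_ball, Prod.dist_eq, max_lt_iff, dist_eq_norm, Real.dist_eq, sub_zero, abs_lt] at hq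
    exact ⟨by linarith [norm_le_norm_add_norm_sub' q.1 x₀], hq₀, hq.2.2.le⟩
  have hlower : Tendsto (fun q : (Fin d → ℝ) × ℝ => u0 q.1) (𝓝[{q | 0 ≤ q.2}] (x₀, 0))
      (𝓝 (u0 x₀)) :=
    ((hlip.continuous.comp continuous_fst).tendsto _).mono_left nhdsWithin_le_nhds
  have hupper' := (hupper.tendsto (x₀, 0)).mono_left (nhdsWithin_le_nhds (s := {q | 0 ≤ q.2}))
  rw [zero_mul, Real.zero_rpow (by positivity), mul_zero, add_zero] at hupper'
  show Tendsto _ _ (𝓝 (hlu c d u0 x₀ 0))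
  rw [hlu_zero]
  exact tendsto_of_tendsto_of_tendsto_of_le_of_le' hlower hupper'
    (eventually_nhdsWithin_of_forall fun q (hq : 0 ≤ q.2) =>
      u0_le_hlu hc hmono hlip hdecay q.1 hq)
    (hnear.mono fun q hq => hD q.1 hq.1 q.2 hq.2)

theorem continuousOn_hlu (hc : 0 < c) (hmono : Monotone u0) (hlip : LocallyLipschitz u0)
    (hdecay : DecayCond d u0) :
    ContinuousOn (fun q : (Fin d → ℝ) × ℝ => hlu c d u0 q.1 q.2) {q | 0 ≤ q.2} := by
  rintro ⟨x, t⟩ (ht : 0 ≤ t)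
  rcases ht.eq_or_lt with rfl | ht
  · exact continuousWithinAt_hlu_zero hc hmono hlip hdecay x
  · obtain ⟨ε, hε, L, hL⟩ := exists_lipschitzOnWith_hlu hc hmono hlip hdecay (p := (x, t)) ht
    exact (hL.continuousOn.continuousAt (ball_mem_nhds _ hε)).continuousWithinAt

end HopfLax

theorem hlu_regularity_general
    (d : ℕ) (c : ℝ) (hc : 0 < c)
    (u0 : (Fin d → ℝ) → ℝ) (hmono : Monotone u0) (hlip : LocallyLipschitz u0)
    (hdecay : DecayCond d u0) :
    -- finiteness of the supremum
    (∀ (x : Fin d → ℝ) (t : ℝ), 0 < t →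
        (hlSet c d u0 x t).Nonempty ∧ BddAbove (hlSet c d u0 x t)) ∧
    -- nondecreasing in x
    (∀ (t : ℝ), 0 ≤ t → ∀ x x' : Fin d → ℝ, x ≤ x' → hlu c d u0 x t ≤ hlu c d u0 x' t) ∧
    -- strictly increasing in t on (0,∞)
    (∀ (x : Fin d → ℝ) (s t : ℝ), 0 < s → s < t → hlu c d u0 x s < hlu c d u0 x t) ∧
    -- locally Lipschitz on ℝ^d × (0,∞)
    (∀ p : (Fin d → ℝ) × ℝ, 0 < p.2 → ∃ ε > 0, ∃ L : NNReal,
        LipschitzOnWith L (fun q : (Fin d → ℝ) × ℝ => hlu c d u0 q.1 q.2)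
          (Metric.ball p ε ∩ {q : (Fin d → ℝ) × ℝ | 0 < q.2})) ∧
    -- continuous on ℝ^d × [0,∞)
    ContinuousOn (fun q : (Fin d → ℝ) × ℝ => hlu c d u0 q.1 q.2)
      {q : (Fin d → ℝ) × ℝ | 0 ≤ q.2} ∧
    -- u(x,t) → u₀(x) as t ↓ 0
    (∀ x : Fin d → ℝ,
        Tendsto (fun t => hlu c d u0 x t) (nhdsWithin 0 (Set.Ioi 0)) (nhds (u0 x))) := by
  have hcont := continuousOn_hlu hc hmono hlip hdecay
  refine ⟨fun x t ht =>
      ⟨Nonempty.image _ ⟨x, le_refl x⟩, bddAbove_hlSet hc.le hmono hdecay x ht⟩,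
    fun t ht => monotone_hlu hc.le hmono hdecay ht,
    fun x s t hs hst => strictMonoOn_hlu hc hmono hlip hdecay x hs (hs.trans hst) hst,
    fun p hp => ?_, hcont, fun x => ?_⟩
  · obtain ⟨ε, hε, L, hL⟩ := exists_lipschitzOnWith_hlu hc hmono hlip hdecay hp
    exact ⟨ε, hε, L, hL.mono inter_subset_left⟩
  · have hx := (hcont (x, 0) (show (0 : ℝ) ≤ 0 from le_rfl)).comp
      (continuous_const.prodMk continuous_id).continuousWithinAt
      fun t (ht : t ∈ Ioi 0) => le_of_lt ht
    simpa [Function.comp_def, hlu_zero] using hx.tendsto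

/-- Regularity of the Hopf-Lax function `u`: the supremum defining `u(x,t)` is finite
(the set is nonempty and bounded above); `u` is nondecreasing in `x`; strictly
increasing in `t` on `(0,∞)`; locally Lipschitz on `ℝ^d × (0,∞)`; continuous on
`ℝ^d × [0,∞)`; and `u(x,t) → u₀(x)` as `t ↓ 0`. -/
theorem hlu_regularity
    (d : ℕ) (hd : 1 ≤ d) (c : ℝ) (hc : 0 < c)
    (u0 : (Fin d → ℝ) → ℝ) (hmono : Monotone u0) (hlip : LocallyLipschitz u0)
    (hdecay : DecayCond d u0) :
    -- finiteness of the supremum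
    (∀ (x : Fin d → ℝ) (t : ℝ), 0 < t →
        (hlSet c d u0 x t).Nonempty ∧ BddAbove (hlSet c d u0 x t)) ∧
    -- nondecreasing in x
    (∀ (t : ℝ), 0 ≤ t → ∀ x x' : Fin d → ℝ, x ≤ x' → hlu c d u0 x t ≤ hlu c d u0 x' t) ∧
    -- strictly increasing in t on (0,∞)
    (∀ (x : Fin d → ℝ) (s t : ℝ), 0 < s → s < t → hlu c d u0 x s < hlu c d u0 x t) ∧
    -- locally Lipschitz on ℝ^d × (0,∞)
    (∀ p : (Fin d → ℝ) × ℝ, 0 < p.2 → ∃ ε > 0, ∃ L : NNReal,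
        LipschitzOnWith L (fun q : (Fin d → ℝ) × ℝ => hlu c d u0 q.1 q.2)
          (Metric.ball p ε ∩ {q : (Fin d → ℝ) × ℝ | 0 < q.2})) ∧
    -- continuous on ℝ^d × [0,∞)
    ContinuousOn (fun q : (Fin d → ℝ) × ℝ => hlu c d u0 q.1 q.2)
      {q : (Fin d → ℝ) × ℝ | 0 ≤ q.2} ∧
    -- u(x,t) → u₀(x) as t ↓ 0
    (∀ x : Fin d → ℝ,
        Tendsto (fun t => hlu c d u0 x t) (nhdsWithin 0 (Set.Ioi 0)) (nhds (u0 x))) :=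
  hlu_regularity_general d c hc u0 hmono hlip hdecay
end
end

section
/- Rarefaction fan profile: let λ, ρ ∈ (0,∞)^d with λ ≠ ρ, and u_0(x) = min(λ·x, ρ·x) (equivalently, u_0(x) = λ·x when (ρ−λ)·x ≥ 0 and u_0(x) = ρ·x when (ρ−λ)·x ≤ 0). Then for every t > 0: (i) for every x with −t(ρ−λ)·∇f(ρ) < (ρ−λ)·x < −t(ρ−λ)·∇f(λ), there exists a unique s = s(x,t) ∈ (0,1) such that (ρ−λ)·x = −t(ρ−λ)·∇f(sλ + (1−s)ρ); (ii) u(x,t) = ρ·x + t·f(ρ) if (ρ−λ)·x ≤ −t(ρ−λ)·∇f(ρ); u(x,t) = (sλ + (1−s)ρ)·x + t·f(sλ + (1−s)ρ) with s = s(x,t) if −t(ρ−λ)·∇f(ρ) < (ρ−λ)·x < −t(ρ−λ)·∇f(λ); and u(x,t) = λ·x + t·f(λ) if (ρ−λ)·x ≥ −t(ρ−λ)·∇f(λ). -/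
open Set

noncomputable section

/-- `κ = (c/(d+1))^{d+1}`. -/
def kap (c : ℝ) (d : ℕ) : ℝ := (c / ((d : ℝ) + 1)) ^ (d + 1)

/-- The velocity `f(ρ) = κ (ρ₁⋯ρ_d)⁻¹`. -/
def fvel (c : ℝ) (d : ℕ) (ρ : Fin d → ℝ) : ℝ := kap c d / ∏ i, ρ i

/-- `(∇f(ρ))_i = −κ/((ρ₁⋯ρ_d) ρ_i)`. -/
def gradf (c : ℝ) (d : ℕ) (ρ : Fin d → ℝ) : Fin d → ℝ :=
  fun i => -(kap c d) / ((∏ j, ρ j) * ρ i)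

/-- The interpolated slope `sλ + (1−s)ρ`. -/
def interp (d : ℕ) (l p : Fin d → ℝ) (s : ℝ) : Fin d → ℝ :=
  fun i => s * l i + (1 - s) * p i

/-- `(ρ−λ)·∇f(sλ+(1−s)ρ)`, the quantity governing the rarefaction fan. -/
def fanSpeed (c : ℝ) (d : ℕ) (l p : Fin d → ℝ) (s : ℝ) : ℝ :=
  ∑ i, (p i - l i) * gradf c d (interp d l p s) i

/-!
By AM–GM, `g(z) ≤ σ·z + f(σ)` for `z ≥ 0` and `σ > 0`, with equality at `z = −∇f(σ)`.
Hence, if `u₀ ≤ σ·y` everywhere, every Hopf–Lax candidate is at most `σ·x + t f(σ)`, and this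
bound is attained at `y = x + t∇f(σ)` as soon as `u₀(y) = σ·y` there. For
`u₀ = min(λ·y, ρ·y)` and `σ = sλ + (1−s)ρ`, `s ∈ [0,1]`, the first condition always holds, and
the second one is a sign condition on `(ρ−λ)·y`, which is what each of the three regions
provides.

Writing `σ(s) = sλ + (1−s)ρ` and `S = Σ (ρᵢ−λᵢ)/σᵢ`, one has `(ρ−λ)·∇f(σ) = −f(σ) S` and
`d/ds (f(σ) S) = f(σ) (S² + Σ ((ρᵢ−λᵢ)/σᵢ)²) > 0` when `λ ≠ ρ`; so `s ↦ −t(ρ−λ)·∇f(σ(s))` is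
continuous and strictly increasing on `[0,1]`, which gives `(i)` by the intermediate value
theorem.
-/

open Finset

section HopfLax

variable {c : ℝ} {d : ℕ}

lemma kap_rpow_inv (hc : 0 ≤ c) : kap c d ^ ((d : ℝ) + 1)⁻¹ = c / ((d : ℝ) + 1) := by
  simpa [kap] using Real.pow_rpow_inv_natCast (x := c / ((d : ℝ) + 1)) (by positivity)
    (Nat.succ_ne_zero d)

theorem gfun_le_dotProduct_add_fvel (hc : 0 ≤ c) {σ z : Fin d → ℝ} (hσ : ∀ i, 0 < σ i)
    (hz : ∀ i, 0 ≤ z i) : gfun c d z ≤ σ ⬝ᵥ z + fvel c d σ := by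
  have hP : 0 < ∏ i, σ i := prod_pos fun i _ => hσ i
  set w : ℝ := ((d : ℝ) + 1)⁻¹
  -- AM–GM for the `d + 1` numbers `f(σ), σ₁z₁, …, σ_d z_d`, whose product is `κ ∏ zᵢ`
  set a : Fin (d + 1) → ℝ := Fin.cons (fvel c d σ) (fun i => σ i * z i)
  have ha : ∀ i, 0 ≤ a i := Fin.cases (by simp only [a, Fin.cons_zero, fvel, kap]; positivity)
    fun i => mul_nonneg (hσ i).le (hz i)
  have amgm := Real.geom_mean_le_arith_mean_weighted univ (fun _ => w) a
    (fun _ _ => by positivity) (by simp [w, mul_inv_cancel₀ (by positivity : (d : ℝ) + 1 ≠ 0)])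
    fun i _ => ha i
  have hprod : ∏ i, a i = kap c d * ∏ i, z i := by
    simp only [a, Fin.prod_univ_succ, Fin.cons_zero, Fin.cons_succ, prod_mul_distrib, fvel]
    field_simp
  rw [Real.finsetProd_rpow _ _ fun i _ => ha i, hprod,
    Real.mul_rpow (by unfold kap; positivity) (prod_nonneg fun i _ => hz i), kap_rpow_inv hc,
    ← mul_sum, Fin.sum_univ_succ] at amgm
  calc gfun c d z = ((d : ℝ) + 1) * (c / ((d : ℝ) + 1) * (∏ i, z i) ^ w) := by
        rw [gfun, ← mul_assoc, mul_div_cancel₀ _ (by positivity)]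
    _ ≤ ((d : ℝ) + 1) * (w * (a 0 + ∑ i : Fin d, a i.succ)) := by gcongr
    _ = σ ⬝ᵥ z + fvel c d σ := by
        simp only [a, w, Fin.cons_zero, Fin.cons_succ, dotProduct]
        field_simp
        ring

lemma neg_gradf_eq_fvel_div (σ : Fin d → ℝ) (i : Fin d) : -gradf c d σ i = fvel c d σ / σ i := by
  rw [gradf, fvel, neg_div, neg_neg, div_div]

theorem gfun_neg_gradf (hc : 0 < c) {σ : Fin d → ℝ} (hσ : ∀ i, 0 < σ i) :
    gfun c d (-gradf c d σ) = σ ⬝ᵥ (-gradf c d σ) + fvel c d σ := by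
  have hP : 0 < ∏ i, σ i := prod_pos fun i _ => hσ i
  have hk : 0 < kap c d := by unfold kap; positivity
  have hF : 0 < fvel c d σ := div_pos hk hP
  have hdot : σ ⬝ᵥ (-gradf c d σ) = d * fvel c d σ := by
    simp [dotProduct, neg_gradf_eq_fvel_div, mul_div_cancel₀ _ (hσ _).ne']
  have hprod : ∏ i, (-gradf c d σ) i = fvel c d σ ^ (d + 1) / kap c d := by
    simp only [Pi.neg_apply, neg_gradf_eq_fvel_div, prod_div_distrib, prod_const, card_univ,
      Fintype.card_fin, fvel, div_pow, pow_succ]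
    field_simp [hP.ne']
  have hroot : (fvel c d σ ^ (d + 1)) ^ ((d : ℝ) + 1)⁻¹ = fvel c d σ := by
    simpa using Real.pow_rpow_inv_natCast hF.le (Nat.succ_ne_zero d)
  rw [gfun, hprod, Real.div_rpow (by positivity) hk.le, hroot,
    kap_rpow_inv hc.le, hdot]
  field_simp

lemma gradf_lt_zero {σ : Fin d → ℝ} (hc : 0 < c) (hσ : ∀ i, 0 < σ i) (i : Fin d) :
    gradf c d σ i < 0 := by
  have hP : 0 < ∏ i, σ i := prod_pos fun i _ => hσ i
  rw [gradf, neg_div]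
  exact neg_neg_of_pos (div_pos (by unfold kap; positivity) (mul_pos hP (hσ i)))

theorem hlu_eq_of_le_dotProduct {u0 : (Fin d → ℝ) → ℝ} {σ x : Fin d → ℝ} {t : ℝ}
    (hc : 0 < c) (hσ : ∀ i, 0 < σ i) (ht : 0 < t) (hle : ∀ y, u0 y ≤ σ ⬝ᵥ y)
    (htouch : u0 (x + t • gradf c d σ) = σ ⬝ᵥ (x + t • gradf c d σ)) :
    hlu c d u0 x t = σ ⬝ᵥ x + t * fvel c d σ := by
  rw [hlu, if_neg ht.ne']
  refine IsGreatest.csSup_eq ⟨⟨x + t • gradf c d σ, ?_, ?_⟩, ?_⟩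
  · intro i
    simpa using mul_nonpos_of_nonneg_of_nonpos ht.le (gradf_lt_zero hc hσ i).le
  · have hz : t⁻¹ • (x - (x + t • gradf c d σ)) = -gradf c d σ := by
      rw [sub_add_cancel_left, smul_neg, inv_smul_smul₀ ht.ne']
    simp only [hz, htouch, gfun_neg_gradf hc hσ, dotProduct_add, dotProduct_smul,
      dotProduct_neg, smul_eq_mul]
    ring
  · rintro _ ⟨y, hy, rfl⟩
    have hz : ∀ i, 0 ≤ (t⁻¹ • (x - y)) i := fun i => by
      simpa using mul_nonneg (inv_nonneg.2 ht.le) (sub_nonneg.2 (hy i))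
    have hdot : t * σ ⬝ᵥ (t⁻¹ • (x - y)) = σ ⬝ᵥ x - σ ⬝ᵥ y := by
      rw [dotProduct_smul, smul_eq_mul, ← mul_assoc, mul_inv_cancel₀ ht.ne', one_mul,
        dotProduct_sub]
    calc u0 y + t * gfun c d (t⁻¹ • (x - y))
        ≤ σ ⬝ᵥ y + t * (σ ⬝ᵥ (t⁻¹ • (x - y)) + fvel c d σ) := by
          gcongr
          exacts [hle y, gfun_le_dotProduct_add_fvel hc.le hσ hz]
      _ = σ ⬝ᵥ x + t * fvel c d σ := by rw [mul_add, hdot]; ring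

end HopfLax

theorem HasDerivAt.fun_finsetProd_of_ne_zero {ι : Type*} {u : Finset ι} {f : ι → ℝ → ℝ}
    {f' : ι → ℝ} {x : ℝ} (hf : ∀ i ∈ u, HasDerivAt (f i) (f' i) x) (hx : ∀ i ∈ u, f i x ≠ 0) :
    HasDerivAt (∏ i ∈ u, f i ·) ((∏ i ∈ u, f i x) * ∑ i ∈ u, f' i / f i x) x := by
  classical
  refine (HasDerivAt.fun_finsetProd hf).congr_deriv ?_
  rw [mul_sum]
  refine sum_congr rfl fun i hi => ?_
  rw [← mul_prod_erase u _ hi, smul_eq_mul]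
  field_simp [hx i hi]

section Segment

variable {c : ℝ} {d : ℕ} {l p : Fin d → ℝ}

lemma interp_pos (hl : ∀ i, 0 < l i) (hp : ∀ i, 0 < p i) {s : ℝ} (hs : s ∈ Icc (0 : ℝ) 1)
    (i : Fin d) : 0 < interp d l p s i := by
  rcases hs.1.eq_or_lt with rfl | hs0
  · simpa [interp] using hp i
  · exact add_pos_of_pos_of_nonneg (mul_pos hs0 (hl i)) (mul_nonneg (sub_nonneg.2 hs.2) (hp i).le)

lemma interp_zero : interp d l p 0 = p := funext fun i => by simp [interp]

lemma interp_one : interp d l p 1 = l := funext fun i => by simp [interp]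

lemma interp_dotProduct (s : ℝ) (y : Fin d → ℝ) :
    interp d l p s ⬝ᵥ y = s * l ⬝ᵥ y + (1 - s) * p ⬝ᵥ y := by
  simp only [dotProduct, interp, mul_sum, ← sum_add_distrib, add_mul, mul_assoc]

lemma min_dotProduct_le_interp_dotProduct {s : ℝ} (hs : s ∈ Icc (0 : ℝ) 1) (y : Fin d → ℝ) :
    min (l ⬝ᵥ y) (p ⬝ᵥ y) ≤ interp d l p s ⬝ᵥ y := by
  rw [interp_dotProduct]
  nlinarith [min_le_left (l ⬝ᵥ y) (p ⬝ᵥ y), min_le_right (l ⬝ᵥ y) (p ⬝ᵥ y), hs.1, hs.2]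

lemma dotProduct_sub_dotProduct_add_smul_gradf (x : Fin d → ℝ) (t s : ℝ) :
    p ⬝ᵥ (x + t • gradf c d (interp d l p s)) - l ⬝ᵥ (x + t • gradf c d (interp d l p s))
      = (p - l) ⬝ᵥ x + t * fanSpeed c d l p s := by
  rw [← sub_dotProduct, dotProduct_add, dotProduct_smul, smul_eq_mul]
  rfl

lemma min_dotProduct_eq_interp_dotProduct {y : Fin d → ℝ} (h : p ⬝ᵥ y = l ⬝ᵥ y) (s : ℝ) :
    min (l ⬝ᵥ y) (p ⬝ᵥ y) = interp d l p s ⬝ᵥ y := by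
  rw [interp_dotProduct, h, min_self]
  ring

lemma fanSpeed_eq (s : ℝ) :
    fanSpeed c d l p s = -(fvel c d (interp d l p s) * ∑ i, (p i - l i) / interp d l p s i) := by
  simp only [fanSpeed, gradf, fvel, mul_sum, ← sum_neg_distrib]
  refine sum_congr rfl fun i _ => ?_
  ring

lemma hasDerivAt_interp (s : ℝ) (i : Fin d) :
    HasDerivAt (fun s => interp d l p s i) (l i - p i) s := by
  have h : (fun s => interp d l p s i) = fun s => p i + s * (l i - p i) :=
    funext fun s => by simp only [interp]; ring
  simpa [h] using ((hasDerivAt_id' s).mul_const (l i - p i)).const_add (p i)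

lemma hasDerivAt_fvel_interp {s : ℝ} (hs : ∀ i, interp d l p s i ≠ 0) :
    HasDerivAt (fun s => fvel c d (interp d l p s))
      (fvel c d (interp d l p s) * ∑ i, (p i - l i) / interp d l p s i) s := by
  have hP := HasDerivAt.fun_finsetProd_of_ne_zero (u := univ) (fun i _ => hasDerivAt_interp s i)
    fun i _ => hs i
  refine ((hasDerivAt_const s (kap c d)).div hP (prod_ne_zero_iff.2 fun i _ => hs i)).congr_deriv ?_
  have hsum : ∑ i, (l i - p i) / interp d l p s i = -∑ i, (p i - l i) / interp d l p s i := by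
    simp only [← sum_neg_distrib, ← neg_div, neg_sub]
  rw [hsum, fvel]
  field_simp
  ring

lemma hasDerivAt_sum_div_interp {s : ℝ} (hs : ∀ i, interp d l p s i ≠ 0) :
    HasDerivAt (fun s => ∑ i, (p i - l i) / interp d l p s i)
      (∑ i, ((p i - l i) / interp d l p s i) ^ 2) s := by
  refine (HasDerivAt.fun_sum (u := univ) fun i _ =>
    (hasDerivAt_const s (p i - l i)).div (hasDerivAt_interp s i) (hs i)).congr_deriv ?_
  refine sum_congr rfl fun i _ => ?_
  field_simp
  ring

lemma hasDerivAt_fanSpeed {s : ℝ} (hs : ∀ i, interp d l p s i ≠ 0) :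
    HasDerivAt (fanSpeed c d l p) (-(fvel c d (interp d l p s) *
      ((∑ i, (p i - l i) / interp d l p s i) ^ 2 +
        ∑ i, ((p i - l i) / interp d l p s i) ^ 2))) s := by
  rw [funext fanSpeed_eq]
  exact ((hasDerivAt_fvel_interp hs).mul (hasDerivAt_sum_div_interp hs)).neg.congr_deriv (by ring)

theorem fanSpeed_strictAntiOn (hc : 0 < c) (hl : ∀ i, 0 < l i) (hp : ∀ i, 0 < p i) (hlp : l ≠ p) :
    StrictAntiOn (fanSpeed c d l p) (Icc 0 1) := by
  refine strictAntiOn_of_deriv_neg (convex_Icc 0 1) (fun s hs =>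
    (hasDerivAt_fanSpeed fun i => (interp_pos hl hp hs i).ne').continuousAt.continuousWithinAt)
    fun s hs => ?_
  rw [interior_Icc] at hs
  have hs' := Ioo_subset_Icc_self hs
  have hσ := interp_pos hl hp hs'
  obtain ⟨i, hi⟩ : ∃ i, p i ≠ l i := by
    by_contra! h
    exact hlp (funext fun i => (h i).symm)
  have hsq : 0 < ∑ i, ((p i - l i) / interp d l p s i) ^ 2 :=
    sum_pos' (fun i _ => sq_nonneg _) ⟨i, mem_univ i,
      sq_pos_of_ne_zero (div_ne_zero (sub_ne_zero.2 hi) (hσ i).ne')⟩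
  rw [(hasDerivAt_fanSpeed fun i => (hσ i).ne').deriv, neg_neg_iff_pos]
  have hF : 0 < fvel c d (interp d l p s) :=
    div_pos (by unfold kap; positivity) (prod_pos fun i _ => hσ i)
  positivity

lemma fanSpeed_continuousOn (hl : ∀ i, 0 < l i) (hp : ∀ i, 0 < p i) :
    ContinuousOn (fanSpeed c d l p) (Icc 0 1) := fun _ hs =>
  (hasDerivAt_fanSpeed fun i => (interp_pos hl hp hs i).ne').continuousAt.continuousWithinAt

end Segment

theorem rarefaction_profile_general
    (d : ℕ) (c : ℝ) (hc : 0 < c)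
    (l p : Fin d → ℝ) (hl : ∀ i, 0 < l i) (hp : ∀ i, 0 < p i) (hlp : l ≠ p) :
    ∀ (t : ℝ), 0 < t →
      -- (i) existence and uniqueness of s(x,t) in the fan
      (∀ x : Fin d → ℝ,
          -t * fanSpeed c d l p 0 < (∑ i, (p i - l i) * x i) →
          (∑ i, (p i - l i) * x i) < -t * fanSpeed c d l p 1 →
          ∃! s : ℝ, s ∈ Set.Ioo (0 : ℝ) 1 ∧
            (∑ i, (p i - l i) * x i) = -t * fanSpeed c d l p s) ∧
      -- (ii) the three-region formula for u(x,t)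
      (∀ x : Fin d → ℝ,
          ((∑ i, (p i - l i) * x i) ≤ -t * fanSpeed c d l p 0 →
            hlu c d (fun z => min (∑ i, l i * z i) (∑ i, p i * z i)) x t =
              (∑ i, p i * x i) + t * fvel c d p) ∧
          (∀ s : ℝ, s ∈ Set.Ioo (0 : ℝ) 1 →
            (∑ i, (p i - l i) * x i) = -t * fanSpeed c d l p s →
            hlu c d (fun z => min (∑ i, l i * z i) (∑ i, p i * z i)) x t =
              (∑ i, interp d l p s i * x i) + t * fvel c d (interp d l p s)) ∧
          ((∑ i, (p i - l i) * x i) ≥ -t * fanSpeed c d l p 1 →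
            hlu c d (fun z => min (∑ i, l i * z i) (∑ i, p i * z i)) x t =
              (∑ i, l i * x i) + t * fvel c d l)) := by
  intro t ht
  have hmono : StrictMonoOn (fun s => -t * fanSpeed c d l p s) (Icc 0 1) := fun a ha b hb hab =>
    mul_lt_mul_of_neg_left (fanSpeed_strictAntiOn hc hl hp hlp ha hb hab) (neg_neg_of_pos ht)
  refine ⟨fun x h0 h1 => ?_, fun x => ⟨fun hx => ?_, fun s hs hx => ?_, fun hx => ?_⟩⟩
  · obtain ⟨s, hs, hxs⟩ := intermediate_value_Ioo zero_le_one
      (continuousOn_const.mul (fanSpeed_continuousOn hl hp)) ⟨h0, h1⟩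
    exact ⟨s, ⟨hs, hxs.symm⟩, fun s' ⟨hs', hxs'⟩ => hmono.injOn (Ioo_subset_Icc_self hs')
      (Ioo_subset_Icc_self hs) (hxs'.symm.trans hxs.symm)⟩
  · have hD := dotProduct_sub_dotProduct_add_smul_gradf (c := c) (l := l) (p := p) x t 0
    rw [interp_zero] at hD
    exact hlu_eq_of_le_dotProduct (u0 := fun y => min (l ⬝ᵥ y) (p ⬝ᵥ y)) hc hp ht
      (fun y => min_le_right _ _)
      (min_eq_right (by linarith [show (p - l) ⬝ᵥ x ≤ _ from hx]))
  · have hD := dotProduct_sub_dotProduct_add_smul_gradf (c := c) (l := l) (p := p) x t s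
    have hs' := Ioo_subset_Icc_self hs
    exact hlu_eq_of_le_dotProduct (u0 := fun y => min (l ⬝ᵥ y) (p ⬝ᵥ y)) hc
      (interp_pos hl hp hs') ht
      (min_dotProduct_le_interp_dotProduct hs') (min_dotProduct_eq_interp_dotProduct
        (by linarith [show (p - l) ⬝ᵥ x = _ from hx]) s)
  · have hD := dotProduct_sub_dotProduct_add_smul_gradf (c := c) (l := l) (p := p) x t 1
    rw [interp_one] at hD
    exact hlu_eq_of_le_dotProduct (u0 := fun y => min (l ⬝ᵥ y) (p ⬝ᵥ y)) hc hl ht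
      (fun y => min_le_left _ _)
      (min_eq_left (by linarith [show (p - l) ⬝ᵥ x ≥ _ from hx]))

/-- Rarefaction fan profile: for `u₀(x) = min(λ·x, ρ·x)` with `λ ≠ ρ` in `(0,∞)^d` and
`t > 0`: (i) in the strip `−t(ρ−λ)·∇f(ρ) < (ρ−λ)·x < −t(ρ−λ)·∇f(λ)` there is a unique
`s ∈ (0,1)` with `(ρ−λ)·x = −t(ρ−λ)·∇f(sλ+(1−s)ρ)`; (ii) `u(x,t)` equals
`ρ·x + t f(ρ)`, `(sλ+(1−s)ρ)·x + t f(sλ+(1−s)ρ)`, or `λ·x + t f(λ)` in the three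
regions. -/
theorem rarefaction_profile
    (d : ℕ) (hd : 1 ≤ d) (c : ℝ) (hc : 0 < c)
    (l p : Fin d → ℝ) (hl : ∀ i, 0 < l i) (hp : ∀ i, 0 < p i) (hlp : l ≠ p) :
    ∀ (t : ℝ), 0 < t →
      -- (i) existence and uniqueness of s(x,t) in the fan
      (∀ x : Fin d → ℝ,
          -t * fanSpeed c d l p 0 < (∑ i, (p i - l i) * x i) →
          (∑ i, (p i - l i) * x i) < -t * fanSpeed c d l p 1 →
          ∃! s : ℝ, s ∈ Set.Ioo (0 : ℝ) 1 ∧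
            (∑ i, (p i - l i) * x i) = -t * fanSpeed c d l p s) ∧
      -- (ii) the three-region formula for u(x,t)
      (∀ x : Fin d → ℝ,
          ((∑ i, (p i - l i) * x i) ≤ -t * fanSpeed c d l p 0 →
            hlu c d (fun z => min (∑ i, l i * z i) (∑ i, p i * z i)) x t =
              (∑ i, p i * x i) + t * fvel c d p) ∧
          (∀ s : ℝ, s ∈ Set.Ioo (0 : ℝ) 1 →
            (∑ i, (p i - l i) * x i) = -t * fanSpeed c d l p s →
            hlu c d (fun z => min (∑ i, l i * z i) (∑ i, p i * z i)) x t =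
              (∑ i, interp d l p s i * x i) + t * fvel c d (interp d l p s)) ∧
          ((∑ i, (p i - l i) * x i) ≥ -t * fanSpeed c d l p 1 →
            hlu c d (fun z => min (∑ i, l i * z i) (∑ i, p i * z i)) x t =
              (∑ i, l i * x i) + t * fvel c d l)) :=
  rarefaction_profile_general d c hc l p hl hp hlp

end
end
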